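/- arXiv:2510.08208 — 2 statements merged into one kernel-verified Lean document; each statement's English description precedes it below -/
import Mathlib

section
/- Let η = (t₁-t₂)^{-2}dt₁dt₂ + Σ_{i≥1} t₁^{i-1}dt₁·df_i(t₂) with f_i ∈ k[[t]]. Then the map S_η : K → Ω_K, f ↦ res₁(π₁*(f)·η), vanishes on k[[t]] and sends t^{-n} (n > 0) to d(-t^{-n} + f_n). -/
/- `K = k((t))` is modelled by `LaurentSeries k`; `t^n` is `HahnSeries.single n 1`. -/

variable {k : Type*} [Field k] [CharZero k]

/-- The formal derivative `f'` of a Laurent series `f ∈ k((t))`. -/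
noncomputable def lD (f : LaurentSeries k) : LaurentSeries k where
  coeff n := (n + 1 : ℤ) • f.coeff (n + 1)
  isPWO_support' := by
    refine (f.isPWO_support'.image_of_monotone
      (fun a b h => by simpa using sub_le_sub_right h 1 : Monotone (fun a : ℤ => a - 1))).mono ?_
    intro n hn
    simp only [Function.mem_support] at hn
    exact ⟨n + 1, by intro h; apply hn; simp [h], by ring⟩

/-- The residue pairing `⟨f|g⟩ := res (f·g' dt)`, i.e. the coefficient of `t⁻¹` in `f·g'`. -/
noncomputable def resPairing (f g : LaurentSeries k) : k := (f * lD g).coeff (-1)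

/-- `S_η(f)`, for `η = (t₁-t₂)⁻²dt₁dt₂ + Σ_{i≥1} t₁^{i-1}dt₁·df_i(t₂)`, written out in
coefficients: the coefficient of `t₂^b dt₂` in `res₁(π₁*(f)·η)`.  The term of `f(t₁)·η`
with `t₁`-exponent `-1` coming from `f.coeff m · t₁^m` uses `t₁`-exponent `a = -1-m` of
`η`; the `(t₁-t₂)⁻²`-part contributes `(a+1) = -m` at `t₂`-exponent `-2-a = m-1`
(only for `a ≥ 0`, i.e. `m < 0`), and the `t₁^{i-1}df_i(t₂)`-part contributes
`f_{-m}'(t₂)` (only for `i = -m ≥ 1`). -/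
noncomputable def Seta (fseq : ℕ → LaurentSeries k) (f : LaurentSeries k) (b : ℤ) : k :=
  ∑ᶠ m : ℤ, f.coeff m *
    ((if b = m - 1 ∧ m < 0 then ((-m : ℤ) : k) else 0) +
     (if m < 0 then (lD (fseq (-m).toNat)).coeff b else 0))

/-
Only the coefficients of `t^m` with `m < 0` enter `S_η`, so it kills `k[[t]]`; on `t^{-n}` the
`(t₁-t₂)⁻²`-part gives `n t₂^{-n-1} dt₂ = d(-t₂^{-n})` and the `df_i`-part gives `df_n`.
-/

section

omit [CharZero k]

theorem coeff_lD (f : LaurentSeries k) (b : ℤ) : (lD f).coeff b = (b + 1) • f.coeff (b + 1) :=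
  rfl

theorem lD_add (f g : LaurentSeries k) : lD (f + g) = lD f + lD g := by
  ext b
  simp only [coeff_lD, HahnSeries.coeff_add, smul_add]

theorem lD_neg (f : LaurentSeries k) : lD (-f) = -lD f := by
  ext b
  simp only [coeff_lD, HahnSeries.coeff_neg, smul_neg]

theorem coeff_lD_single (m b : ℤ) (c : k) :
    (lD (HahnSeries.single m c)).coeff b = if b = m - 1 then m • c else 0 := by
  rw [coeff_lD]
  split_ifs with hb
  · rw [show b + 1 = m by omega, HahnSeries.coeff_single_same]
  · rw [HahnSeries.coeff_single_of_ne (by omega), smul_zero]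

theorem Seta_eq_zero_of_coeff_neg_eq_zero (fseq : ℕ → LaurentSeries k) {f : LaurentSeries k}
    (hf : ∀ n < 0, f.coeff n = 0) (b : ℤ) : Seta fseq f b = 0 := by
  refine finsum_eq_zero_of_forall_eq_zero fun m => ?_
  by_cases hm : m < 0
  · rw [hf m hm, zero_mul]
  · simp only [hm, and_false, if_false, add_zero, mul_zero]

theorem Seta_single_of_neg (fseq : ℕ → LaurentSeries k) {m : ℤ} (hm : m < 0) (c : k) (b : ℤ) :
    Seta fseq (HahnSeries.single m c) b =
      c * ((if b = m - 1 then ((-m : ℤ) : k) else 0) + (lD (fseq (-m).toNat)).coeff b) := by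
  rw [Seta, finsum_eq_single _ m fun m' hm' => by rw [HahnSeries.coeff_single_of_ne hm', zero_mul]]
  simp only [HahnSeries.coeff_single_same, hm, and_true, if_true]

end

theorem Seta_vanishes_and_on_monomials_general (fseq : ℕ → LaurentSeries k) :
    (∀ f : LaurentSeries k, (∀ n < 0, f.coeff n = 0) → ∀ b : ℤ, Seta fseq f b = 0) ∧
    (∀ n : ℕ, 0 < n → ∀ b : ℤ,
      Seta fseq (HahnSeries.single (-(n : ℤ)) 1) b
        = (lD (-(HahnSeries.single (-(n : ℤ)) 1) + fseq n)).coeff b) := by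
  refine ⟨fun f hf b => Seta_eq_zero_of_coeff_neg_eq_zero fseq hf b, fun n hn b => ?_⟩
  rw [Seta_single_of_neg fseq (by omega), one_mul, neg_neg, Int.toNat_natCast, lD_add, lD_neg,
    HahnSeries.coeff_add, HahnSeries.coeff_neg, coeff_lD_single]
  congr 1
  split_ifs <;> simp

/-- The map `S_η : f ↦ res₁(π₁*(f)·η)` vanishes on `k[[t]]` and sends `t^{-n}` (`n > 0`)
to `d(-t^{-n} + f_n)`. -/
theorem Seta_vanishes_and_on_monomials (fseq : ℕ → LaurentSeries k)
    (hreg : ∀ i, ∀ n < 0, (fseq i).coeff n = 0) :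
    (∀ f : LaurentSeries k, (∀ n < 0, f.coeff n = 0) → ∀ b : ℤ, Seta fseq f b = 0) ∧
    (∀ n : ℕ, 0 < n → ∀ b : ℤ,
      Seta fseq (HahnSeries.single (-(n : ℤ)) 1) b
        = (lD (-(HahnSeries.single (-(n : ℤ)) 1) + fseq n)).coeff b) :=
  Seta_vanishes_and_on_monomials_general fseq
end

section
/- Let f_n ∈ k[[t]] (n ≥ 1) and L = span_k{t^{-n} - f_n : n ≥ 1} ⊂ k((t)), considered modulo constants, with the residue pairing ⟨f|g⟩ = res(f·g' dt). Then ⟨t^{-m} - f_m | t^{-n} - f_n⟩ = 0 for all m, n ≥ 1 (i.e., L is Lagrangian (isotropic)) if and only if the bidifferential η₀ = Σ_{i≥1} t₁^{i-1}dt₁·df_i(t₂) is a symmetric tensor, i.e., symmetric under exchanging t₁ and t₂. -/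
/- `K = k((t))` is modelled by `LaurentSeries k`; `t^n` is `HahnSeries.single n 1`. -/

variable {k : Type*} [Field k] [CharZero k]

lemma lD_coeff (g : LaurentSeries k) (n : ℤ) : (lD g).coeff n = (n + 1 : ℤ) • g.coeff (n + 1) :=
  rfl

lemma lD_sub (g h : LaurentSeries k) : lD (g - h) = lD g - lD h := by
  ext n
  simp [lD_coeff, smul_sub]

lemma lD_single (a : ℤ) (r : k) :
    lD (HahnSeries.single a r) = HahnSeries.single (a - 1) (a • r) := by
  ext n
  rw [lD_coeff]
  rcases eq_or_ne n (a - 1) with h | h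
  · subst h
    simp
  · rw [HahnSeries.coeff_single_of_ne h, HahnSeries.coeff_single_of_ne (by omega), smul_zero]

lemma lD_nonneg_support (g : LaurentSeries k) (hg : ∀ n < 0, g.coeff n = 0) :
    ∀ n < 0, (lD g).coeff n = 0 := by
  intro n hn
  rw [lD_coeff]
  rcases eq_or_ne n (-1) with h | h
  · subst h; simp
  · rw [hg (n + 1) (by omega), smul_zero]

lemma mul_coeff_neg_one_eq_zero (x y : LaurentSeries k)
    (hx : ∀ n < 0, x.coeff n = 0) (hy : ∀ n < 0, y.coeff n = 0) :
    (x * y).coeff (-1) = 0 := by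
  rw [HahnSeries.coeff_mul]
  refine Finset.sum_eq_zero fun ij hij => ?_
  rw [Finset.mem_addAntidiagonal] at hij
  obtain ⟨h1, h2, h3⟩ := hij
  rw [HahnSeries.mem_support] at h1 h2
  by_contra _
  rcases lt_or_ge ij.1 0 with h | h
  · exact h1 (hx _ h)
  · exact h2 (hy _ (by omega))

lemma resPairing_eval (m n : ℕ) (hm : 0 < m) (hn : 0 < n) (g h : LaurentSeries k)
    (hg : ∀ p < 0, g.coeff p = 0) (hh : ∀ p < 0, h.coeff p = 0) :
    resPairing (HahnSeries.single (-(m : ℤ)) 1 - g) (HahnSeries.single (-(n : ℤ)) 1 - h)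
      = (n : k) * g.coeff (n : ℤ) - (m : k) * h.coeff (m : ℤ) := by
  rw [resPairing, lD_sub, lD_single, sub_mul, mul_sub, mul_sub]
  have t1 : ((HahnSeries.single (-(m : ℤ)) 1 : LaurentSeries k) *
      HahnSeries.single (-(n : ℤ) - 1) ((-(n : ℤ)) • (1 : k))).coeff (-1) = 0 := by
    rw [HahnSeries.single_mul_single]
    exact HahnSeries.coeff_single_of_ne (by omega)
  have t2 : ((HahnSeries.single (-(m : ℤ)) 1 : LaurentSeries k) * lD h).coeff (-1) =
      (m : k) * h.coeff (m : ℤ) := by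
    have : (-1 : ℤ) = (m : ℤ) - 1 + (-(m : ℤ)) := by ring
    rw [this, HahnSeries.coeff_single_mul_add, one_mul, lD_coeff]
    rw [show ((m : ℤ) - 1 + 1) = (m : ℤ) by ring, zsmul_eq_mul]
    push_cast
    ring
  have t3 : (g * (HahnSeries.single (-(n : ℤ) - 1) ((-(n : ℤ)) • (1 : k)) :
      LaurentSeries k)).coeff (-1) = -((n : k) * g.coeff (n : ℤ)) := by
    have : (-1 : ℤ) = (n : ℤ) + (-(n : ℤ) - 1) := by ring
    rw [this, HahnSeries.coeff_mul_single_add, zsmul_eq_mul]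
    push_cast
    ring
  have t4 : (g * lD h).coeff (-1) = 0 :=
    mul_coeff_neg_one_eq_zero g (lD h) hg (lD_nonneg_support h hh)
  rw [HahnSeries.coeff_sub, HahnSeries.coeff_sub, HahnSeries.coeff_sub, t1, t2, t3, t4]
  ring

/-- `L = span{t^{-n} - f_n}` (modulo constants) is isotropic for the residue pairing iff
the bidifferential `η₀ = Σ_{i≥1} t₁^{i-1}dt₁ ⊗ f_i'(t₂)dt₂` is symmetric, i.e.
`j·a_{ij} = i·a_{ji}` for all `i, j ≥ 1`, where `a_{ij}` is the coefficient of `t^j`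
in `f_i`. -/
theorem lagrangian_iff_symmetric (f : ℕ → LaurentSeries k)
    (hreg : ∀ i, ∀ n < 0, (f i).coeff n = 0) :
    (∀ m n : ℕ, 0 < m → 0 < n →
        resPairing (HahnSeries.single (-(m : ℤ)) 1 - f m)
          (HahnSeries.single (-(n : ℤ)) 1 - f n) = 0)
      ↔ ∀ i j : ℕ, 1 ≤ i → 1 ≤ j →
          (j : k) * (f i).coeff (j : ℤ) = (i : k) * (f j).coeff (i : ℤ) := by
  constructor
  · intro H i j hi hj
    have := H i j hi hj
    rw [resPairing_eval i j hi hj (f i) (f j) (hreg i) (hreg j)] at this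
    exact sub_eq_zero.mp this
  · intro H m n hm hn
    rw [resPairing_eval m n hm hn (f m) (f n) (hreg m) (hreg n)]
    rw [H m n hm hn, sub_self]
end
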